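/- For a reduced proper generalized Young wall Y whose image Ψ(Y) contains no δ^(k) symbols (equivalently, no row of Y in a position ≡ 0 mod n+1 has a number of boxes divisible by n+1 and positive), the number of distinct parts of the Kostant partition (φ∘Ψ)(Y) equals Σ_{j=1}^{n+1} #(S_j(Y) \ {0}), where S_j(Y) is the set of distinct row-lengths among rows of Y in positions ≡ j mod n+1. -/

import Mathlib

/-- Generators for Kostant partition expressions in type A_n^(1):
`imag j m` is the part (m δ_j); `real c i ℓ` is the part (c δ + α_i^(ℓ));
`dsym m` is the formal symbol δ^(m). -/
inductive Gen (n : ℕ) : Type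
  | imag : Fin n → ℕ → Gen n
  | real : ℕ → Fin (n+1) → ℕ → Gen n
  | dsym : ℕ → Gen n
  deriving DecidableEq

/-- Full unfolding of the symbol δ^(m) under the defining relations. -/
def unfoldDelta (n : ℕ) : ℕ → Multiset (Gen n)
  | 0 => 0
  | (m+1) =>
    if h0 : n = 0 then 0
    else if (m+1) % (n+1) = 0 then
      unfoldDelta n ((m+1)/(n+1)) +
        Multiset.map (fun j : Fin n => Gen.imag j ((m+1)/(n+1))) Finset.univ.val
    else
      Multiset.map (fun j : Fin (n+1) => Gen.real ((m+1)/(n+1)) j ((m+1) % (n+1)))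
        Finset.univ.val
  decreasing_by exact Nat.div_lt_self (Nat.succ_pos m) (by omega)

/-- The unfolding map φ on expressions: expand every δ^(m) symbol. -/
def unfoldExpr (n : ℕ) (e : Multiset (Gen n)) : Multiset (Gen n) :=
  e.bind (fun g => match g with
    | Gen.dsym m => unfoldDelta n m
    | g => {g})

def ValidGen (n : ℕ) : Gen n → Prop
  | Gen.imag _ m => 0 < m
  | Gen.real _ _ ℓ => 1 ≤ ℓ ∧ ℓ ≤ n
  | Gen.dsym m => 0 < m

def IsDsym {n : ℕ} : Gen n → Prop
  | Gen.dsym _ => True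
  | _ => False

/-- Membership in K: a Z_{≥0}-combination of the generators in S_1. -/
def IsK (n : ℕ) (e : Multiset (Gen n)) : Prop :=
  ∀ g ∈ e, ValidGen n g ∧ ¬ IsDsym g

/-- The expression contains parts that can be replaced by some δ^(k). -/
def HasRemovableDeltaExpr (n : ℕ) (e : Multiset (Gen n)) : Prop :=
  ∃ k : ℕ, 0 < k ∧
    ((¬ (n+1) ∣ k ∧ ∀ i : Fin (n+1), Gen.real (k/(n+1)) i (k % (n+1)) ∈ e) ∨
     ((n+1) ∣ k ∧ Gen.dsym (k/(n+1)) ∈ e ∧ ∀ j : Fin n, Gen.imag j (k/(n+1)) ∈ e))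

/-- Membership in K(∞): reduced expressions. -/
def IsKinf (n : ℕ) (e : Multiset (Gen n)) : Prop :=
  (∀ g ∈ e, ValidGen n g) ∧ ¬ HasRemovableDeltaExpr n e

/- Generalized Young walls, encoded by their sequence of row lengths:
`Y r` is the number of boxes in the (r+1)-st row from the bottom. -/

def IsProper (n : ℕ) (Y : ℕ →₀ ℕ) : Prop :=
  ∀ r s : ℕ, r ≤ s → r % (n+1) = s % (n+1) → Y s ≤ Y r

/-- `aCount n Y i k` is the number of i-colored boxes in the k-th column of Y. -/
def aCount (n : ℕ) (Y : ℕ →₀ ℕ) (i : ZMod (n+1)) (k : ℕ) : ℕ :=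
  (Y.support.filter (fun r => k ≤ Y r ∧ (((r : ℤ) + 1 - (k : ℤ) : ℤ) : ZMod (n+1)) = i)).card

/-- Some column of Y contains a removable δ. -/
def HasRemovableDelta (n : ℕ) (Y : ℕ →₀ ℕ) : Prop :=
  ∃ k : ℕ, 1 ≤ k ∧ ∀ i : ZMod (n+1), aCount n Y (i - 1) (k+1) < aCount n Y i k

/-- Reduced proper generalized Young walls. -/
def IsYinf (n : ℕ) (Y : ℕ →₀ ℕ) : Prop :=
  IsProper n Y ∧ ¬ HasRemovableDelta n Y

def resFin (n r : ℕ) : Fin (n+1) := ⟨(r+1) % (n+1), Nat.mod_lt _ (Nat.succ_pos n)⟩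

/-- The Kostant partition part(s) assigned to a row in residue class j (of row number
mod n+1) with N boxes. -/
def rowPart (n : ℕ) (j : Fin (n+1)) (N : ℕ) : Multiset (Gen n) :=
  if N = 0 then 0
  else if hj : j.val = 0 then
    if N % (n+1) = 0 then {Gen.dsym (N/(n+1))}
    else {Gen.real (N/(n+1)) (Fin.last n) (N % (n+1))}
  else
    if N % (n+1) = 0 then {Gen.imag ⟨j.val - 1, by have := j.isLt; omega⟩ (N/(n+1))}
    else {Gen.real (N/(n+1)) ⟨j.val - 1, by have := j.isLt; omega⟩ (N % (n+1))}

/-- The map Ψ from generalized Young walls to Kostant partition expressions. -/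
def PsiMap (n : ℕ) (Y : ℕ →₀ ℕ) : Multiset (Gen n) :=
  Y.support.val.bind (fun r => rowPart n (resFin n r) (Y r))

/-- S_j(Y) \ {0}: the set of distinct nonzero lengths of rows in positions ≡ j mod n+1. -/
def Sj (n : ℕ) (Y : ℕ →₀ ℕ) (j : ℕ) : Finset ℕ :=
  ((Y.support.filter (fun r => (r+1) % (n+1) = j % (n+1))).image Y).erase 0

/- When no row in residue class 0 has a positive length divisible by n+1, every nonempty row
contributes a single part which is not a δ^(k), so φ acts as the identity; and the part
determines the pair (residue class, length) of its row. The distinct parts are therefore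
counted by the distinct such pairs, that is, residue class by residue class, by the sets
S_j(Y) \ {0}. -/

/-- The unique part in `rowPart n j N` for `N ≠ 0`, except that for `j = 0` and `(n+1) ∣ N`
the true part is `Gen.dsym (N/(n+1))`, not this one. -/
def rowGen (n : ℕ) (j : Fin (n+1)) (N : ℕ) : Gen n :=
  if hj : j.val = 0 then Gen.real (N/(n+1)) (Fin.last n) (N % (n+1))
  else if N % (n+1) = 0 then Gen.imag ⟨j.val - 1, by have := j.isLt; omega⟩ (N/(n+1))
  else Gen.real (N/(n+1)) ⟨j.val - 1, by have := j.isLt; omega⟩ (N % (n+1))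

def rowGenInv (n : ℕ) : Gen n → Fin (n+1) × ℕ
  | Gen.imag i m => (i.succ, (n+1) * m)
  | Gen.real c i ℓ => (if h : i = Fin.last n then 0 else (i.castLT (Fin.val_lt_last h)).succ,
      (n+1) * c + ℓ)
  | Gen.dsym _ => (0, 0)

lemma rowGenInv_rowGen (n : ℕ) (j : Fin (n+1)) (N : ℕ) :
    rowGenInv n (rowGen n j N) = (j, N) := by
  have hj := j.isLt
  have hdiv : (n+1) * (N / (n+1)) + N % (n+1) = N := Nat.div_add_mod N (n+1)
  unfold rowGen
  split_ifs with hj0 hN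
  · simp [rowGenInv, Fin.ext_iff, hj0, hdiv]
  · simp only [rowGenInv, Prod.mk.injEq]
    exact ⟨Fin.ext (by simp; omega), Nat.mul_div_cancel' (Nat.dvd_of_mod_eq_zero hN)⟩
  · have hne : (⟨j.val - 1, by omega⟩ : Fin (n+1)) ≠ Fin.last n := by
      simp [Fin.ext_iff]; omega
    simp only [rowGenInv, dif_neg hne, Prod.mk.injEq, hdiv, and_true]
    exact Fin.ext (by simp; omega)

lemma rowGen_injective (n : ℕ) : Function.Injective (Function.uncurry (rowGen n)) :=
  Function.LeftInverse.injective (g := rowGenInv n) fun ⟨j, N⟩ => rowGenInv_rowGen n j N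

lemma not_isDsym_rowGen (n : ℕ) (j : Fin (n+1)) (N : ℕ) : ¬ IsDsym (rowGen n j N) := by
  unfold rowGen; split_ifs <;> exact id

lemma rowPart_eq_singleton {n N : ℕ} {j : Fin (n+1)} (hN : N ≠ 0)
    (hj : j.val = 0 → N % (n+1) ≠ 0) : rowPart n j N = {rowGen n j N} := by
  by_cases hj0 : j.val = 0
  · simp [rowPart, rowGen, hN, hj0, hj hj0]
  · simp only [rowPart, rowGen, hN, hj0, dite_false, if_false]
    split_ifs <;> rfl

lemma unfoldExpr_eq_self {n : ℕ} {e : Multiset (Gen n)} (he : ∀ g ∈ e, ¬ IsDsym g) :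
    unfoldExpr n e = e := by
  conv_rhs => rw [← Multiset.map_id e, ← Multiset.bind_singleton]
  refine Multiset.bind_congr fun g hg => ?_
  cases g with
  | dsym m => exact absurd trivial (he _ hg)
  | _ => rfl

lemma psiMap_eq_map {n : ℕ} {Y : ℕ →₀ ℕ}
    (hno : ∀ r : ℕ, (r+1) % (n+1) = 0 → Y r % (n+1) = 0 → Y r = 0) :
    PsiMap n Y = Y.support.val.map fun r => rowGen n (resFin n r) (Y r) := by
  rw [PsiMap, ← Multiset.bind_singleton]
  refine Multiset.bind_congr fun r hr => ?_
  have hYr : Y r ≠ 0 := Finsupp.mem_support_iff.mp hr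
  exact rowPart_eq_singleton hYr fun h0 hY0 => hYr (hno r h0 hY0)

lemma Finset.card_image_pair_eq_sum_card_fiber {ι α β : Type*} [DecidableEq α]
    [DecidableEq β] (s : Finset ι) (t : Finset α) (a : ι → α) (b : ι → β)
    (ha : ∀ x ∈ s, a x ∈ t) :
    (s.image fun x => (a x, b x)).card = ∑ y ∈ t, ((s.filter (a · = y)).image b).card := by
  rw [card_eq_sum_card_fiberwise (f := Prod.fst) fun p hp => by
    obtain ⟨x, hx, rfl⟩ := mem_image.mp hp; exact ha x hx]
  refine sum_congr rfl fun y _ => ?_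
  have hfiber : (s.image fun x => (a x, b x)).filter (·.1 = y)
      = ((s.filter (a · = y)).image b).image (Prod.mk y) := by
    ext ⟨y', c⟩
    simp only [mem_filter, mem_image, Prod.mk.injEq]
    constructor
    · rintro ⟨⟨x, hx, rfl, rfl⟩, rfl⟩
      exact ⟨b x, ⟨x, ⟨hx, rfl⟩, rfl⟩, rfl, rfl⟩
    · rintro ⟨_, ⟨x, ⟨hx, rfl⟩, rfl⟩, rfl, rfl⟩
      exact ⟨⟨x, hx, rfl, rfl⟩, rfl⟩
  rw [hfiber, card_image_of_injective _ (Prod.mk_right_injective y)]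

lemma Finset.sum_Icc_one_eq_sum_range {M : Type*} [AddCancelCommMonoid M] {f : ℕ → M}
    {m : ℕ} (hf : f m = f 0) : ∑ j ∈ Icc 1 m, f j = ∑ j ∈ range m, f j := by
  refine add_left_cancel (a := f 0) ?_
  rw [← zero_add 1, Icc_add_one_left_eq_Ioc, ← sum_cons (h := by simp),
    ← Icc_eq_cons_Ioc (Nat.zero_le m), ← Nat.range_succ_eq_Icc_zero, sum_range_succ, hf,
    add_comm]

lemma Sj_eq_image (n : ℕ) (Y : ℕ →₀ ℕ) (j : ℕ) :
    Sj n Y j = (Y.support.filter fun r => (r+1) % (n+1) = j % (n+1)).image Y := by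
  refine Finset.erase_eq_of_notMem fun h0 => ?_
  obtain ⟨r, hr, hr0⟩ := Finset.mem_image.mp h0
  exact Finsupp.mem_support_iff.mp (Finset.mem_filter.mp hr).1 hr0

lemma Sj_add_period (n : ℕ) (Y : ℕ →₀ ℕ) : Sj n Y (n+1) = Sj n Y 0 := by
  unfold Sj
  rw [Nat.mod_self, Nat.zero_mod]

lemma Sj_val_eq_image (n : ℕ) (Y : ℕ →₀ ℕ) (i : Fin (n+1)) :
    Sj n Y i = (Y.support.filter (resFin n · = i)).image Y := by
  rw [Sj_eq_image, Nat.mod_eq_of_lt i.isLt]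
  simp only [resFin, Fin.ext_iff]

theorem distinct_parts_no_dsym_general (n : ℕ) (Y : ℕ →₀ ℕ)
    (hno : ∀ r : ℕ, (r+1) % (n+1) = 0 → Y r % (n+1) = 0 → Y r = 0) :
    (unfoldExpr n (PsiMap n Y)).toFinset.card
      = ∑ j ∈ Finset.Icc 1 (n+1), (Sj n Y j).card := by
  have hunfold : unfoldExpr n (PsiMap n Y) = PsiMap n Y := by
    refine unfoldExpr_eq_self fun g hg => ?_
    rw [psiMap_eq_map hno] at hg
    obtain ⟨r, -, rfl⟩ := Multiset.mem_map.mp hg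
    exact not_isDsym_rowGen n _ _
  have hparts : (PsiMap n Y).toFinset
      = (Y.support.image fun r => (resFin n r, Y r)).image (Function.uncurry (rowGen n)) := by
    rw [psiMap_eq_map hno, Finset.image_image]; rfl
  rw [hunfold, hparts, Finset.card_image_of_injective _ (rowGen_injective n),
    Finset.card_image_pair_eq_sum_card_fiber _ Finset.univ _ _ fun _ _ => Finset.mem_univ _,
    Finset.sum_Icc_one_eq_sum_range (by rw [Sj_add_period]), ← Fin.sum_univ_eq_sum_range]
  simp only [Sj_val_eq_image]

/-- Step 1 of Proposition 3.13: if Y is a reduced proper generalized Young wall such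
that no row of Y in a position ≡ 0 mod n+1 has a positive number of boxes divisible by
n+1 (equivalently, Ψ(Y) contains no δ^(k) symbol), then the number of distinct parts of
the Kostant partition (φ∘Ψ)(Y) equals Σ_{j=1}^{n+1} #(S_j(Y) \ {0}). -/
theorem distinct_parts_no_dsym (n : ℕ) (hn : 1 ≤ n) (Y : ℕ →₀ ℕ) (hY : IsYinf n Y)
    (hno : ∀ r : ℕ, (r+1) % (n+1) = 0 → Y r % (n+1) = 0 → Y r = 0) :
    (unfoldExpr n (PsiMap n Y)).toFinset.card
      = ∑ j ∈ Finset.Icc 1 (n+1), (Sj n Y j).card :=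
  distinct_parts_no_dsym_general n Y hno
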